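/- arXiv:2006.13657 — 3 statements merged into one kernel-verified Lean document; each statement's English description precedes it below -/
import Mathlib

section
/- Let (Ω, P) be a probability space, let m ≥ 1 be an integer, let H be a random variable with Gamma density m^m x^{m-1} e^{-mx}/(m-1)! on x > 0, and let I be a nonnegative random variable independent of H with Laplace transform L(s) = E[e^{-s I}]. Set b = m (m!)^{-1/m}. Then for all reals a > 0 and σ ≥ 0, ∑_{k=1}^{m} (-1)^{k+1} C(m,k) e^{-k m a σ} L(k m a) ≤ P(H ≥ a(I + σ)) ≤ ∑_{k=1}^{m} (-1)^{k+1} C(m,k) e^{-k b a σ} L(k b a). -/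
/-!
Conditioning on `I`, which is independent of `H`, turns the coverage probability into
`E[S(a(I + σ))]`, where `S(τ) = e^{-mτ} ∑_{j<m} (mτ)^j / j!` is the survival function of `H`; by
the binomial theorem the two sums are `E[1 - (1 - e^{-c a (I + σ)})^m]` for `c = m` and `c = b`.
So it suffices to prove Alzer's pointwise bounds `1 - (1 - e^{-mτ})^m ≤ S(τ) ≤ 1 - (1 - e^{-bτ})^m`
for `τ ≥ 0`.

Each difference `φ` of the two sides vanishes at `0` and at `∞`, and `φ'` is a difference of two
densities whose log-ratio is expressed through `q(u) = log (u / (1 - e^{-u}))`: for `c = m` the sign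
of `φ'` is that of `log m! - (m - 1) q(mτ)`, for `c = b` that of `(m - 1) q(bτ) / τ - (m - b)`.
Both are antitone because `q` is increasing and concave with `q(0) = 0`, so `φ'` changes sign at
most once, from `+` to `-`, which forces `φ ≥ 0`.
-/

open MeasureTheory Set Real ProbabilityTheory

/-- The Gamma density with integer shape `m` and rate `m` (unit mean),
`f(x) = m^m x^{m-1} e^{-m x}/(m-1)!` for `x > 0` and `0` otherwise. -/
noncomputable def nakagamiGammaPdf (m : ℕ) (x : ℝ) : ℝ :=
  if 0 < x then (m : ℝ) ^ m * x ^ (m - 1) * Real.exp (-(m : ℝ) * x) / (Nat.factorial (m - 1) : ℝ)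
  else 0

open Filter Topology
open scoped Nat

theorem nonneg_of_hasDerivAt_of_sign_antitone {f f' g : ℝ → ℝ}
    (hf : ∀ x, HasDerivAt f (f' x) x) (h0 : f 0 = 0) (hlim : Tendsto f atTop (𝓝 0))
    (hg : AntitoneOn g (Ioi 0)) (hsign : ∀ x, 0 < x → (f' x < 0 ↔ g x < 0))
    {x : ℝ} (hx : 0 ≤ x) : 0 ≤ f x := by
  have hcont : Continuous f := continuous_iff_continuousAt.2 fun t => (hf t).continuousAt
  by_cases hcross : ∃ y ∈ Ioc 0 x, g y < 0
  · obtain ⟨y, ⟨hy, hyx⟩, hgy⟩ := hcross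
    have hanti : AntitoneOn f (Ici x) := by
      refine antitoneOn_of_hasDerivWithinAt_nonpos (convex_Ici x) hcont.continuousOn
        (fun t _ => (hf t).hasDerivWithinAt) fun t ht => ?_
      rw [interior_Ici] at ht
      have hyt : y ≤ t := hyx.trans (le_of_lt ht)
      exact ((hsign t (hy.trans_le hyt)).2 ((hg hy (hy.trans_le hyt) hyt).trans_lt hgy)).le
    exact le_of_tendsto hlim (eventually_atTop.2 ⟨x, fun t ht => hanti self_mem_Ici ht ht⟩)
  · push Not at hcross
    have hmono : MonotoneOn f (Icc 0 x) := by
      refine monotoneOn_of_hasDerivWithinAt_nonneg (convex_Icc 0 x) hcont.continuousOn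
        (fun t _ => (hf t).hasDerivWithinAt) fun t ht => ?_
      rw [interior_Icc] at ht
      exact not_lt.1 fun hneg => ((hsign t ht.1).1 hneg).not_ge (hcross t ⟨ht.1, ht.2.le⟩)
    simpa [h0] using hmono (left_mem_Icc.2 hx) (right_mem_Icc.2 hx) hx

lemma sq_mul_exp_le_exp_sub_one_sq {u : ℝ} (hu : 0 ≤ u) : u ^ 2 * exp u ≤ (exp u - 1) ^ 2 := by
  have hsinh : exp u - 1 = 2 * exp (u / 2) * sinh (u / 2) := by
    have hsq : exp u = exp (u / 2) * exp (u / 2) := by rw [← exp_add, add_halves]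
    have hinv : exp (u / 2) * exp (-(u / 2)) = 1 := by rw [← exp_add, add_neg_cancel, exp_zero]
    rw [sinh_eq]
    linear_combination hsq + hinv
  have hle : u * exp (u / 2) ≤ exp u - 1 := by
    rw [hsinh]
    have := mul_le_mul_of_nonneg_left (self_le_sinh_iff.2 (by positivity : 0 ≤ u / 2))
      (by positivity : 0 ≤ 2 * exp (u / 2))
    linarith
  calc u ^ 2 * exp u = (u * exp (u / 2)) ^ 2 := by rw [mul_pow, ← exp_nat_mul]; ring_nf
    _ ≤ (exp u - 1) ^ 2 := pow_le_pow_left₀ (by positivity) hle 2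

/-- `log (u / (1 - e^{-u}))`; the junk value `log 0 = 0` makes it vanish at `0`, its right limit. -/
noncomputable def logDivOneSubExpNeg (u : ℝ) : ℝ := log u - log (1 - exp (-u))

lemma one_sub_exp_neg_pos {u : ℝ} (hu : 0 < u) : 0 < 1 - exp (-u) := by
  simpa using exp_lt_one_iff.2 (neg_lt_zero.2 hu)

lemma logDivOneSubExpNeg_zero : logDivOneSubExpNeg 0 = 0 := by
  simp [logDivOneSubExpNeg]

lemma hasDerivAt_logDivOneSubExpNeg {u : ℝ} (hu : 0 < u) :
    HasDerivAt logDivOneSubExpNeg (u⁻¹ - (exp u - 1)⁻¹) u := by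
  have hd : HasDerivAt (fun y => 1 - exp (-y)) (exp (-u)) u := by
    simpa using ((hasDerivAt_neg u).exp).const_sub 1
  refine ((hasDerivAt_log hu.ne').sub
    ((hasDerivAt_log (one_sub_exp_neg_pos hu).ne').comp u hd)).congr_deriv ?_
  have : exp u - 1 ≠ 0 := sub_ne_zero.2 (one_lt_exp_iff.2 hu).ne'
  rw [exp_neg]
  field_simp

lemma tendsto_logDivOneSubExpNeg_nhdsGT :
    Tendsto logDivOneSubExpNeg (𝓝[>] 0) (𝓝 0) := by
  have hd : HasDerivAt (fun y => 1 - exp (-y)) 1 0 := by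
    simpa using ((hasDerivAt_neg (0 : ℝ)).exp).const_sub 1
  have hslope : Tendsto (fun u => (1 - exp (-u)) / u) (𝓝[>] 0) (𝓝 1) := by
    refine ((hasDerivAt_iff_tendsto_slope.1 hd).mono_left
      (nhdsWithin_mono _ fun u hu => ne_of_gt hu)).congr fun u => ?_
    simp [slope_def_field]
  have hlog := ((continuousAt_log one_ne_zero).tendsto.comp hslope).neg
  rw [log_one, neg_zero] at hlog
  refine hlog.congr' (eventually_nhdsWithin_of_forall fun u (hu : 0 < u) => ?_)
  simp [logDivOneSubExpNeg, log_div (one_sub_exp_neg_pos hu).ne' hu.ne']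

lemma monotoneOn_logDivOneSubExpNeg : MonotoneOn logDivOneSubExpNeg (Ioi 0) := by
  refine monotoneOn_of_hasDerivWithinAt_nonneg (convex_Ioi 0)
    (fun u hu => (hasDerivAt_logDivOneSubExpNeg hu).continuousAt.continuousWithinAt)
    (fun u hu => (hasDerivAt_logDivOneSubExpNeg (interior_subset hu)).hasDerivWithinAt)
    fun u hu => ?_
  rw [interior_Ioi] at hu
  have hlt : u ≤ exp u - 1 := by linarith [add_one_le_exp u]
  exact sub_nonneg.2 (inv_anti₀ hu hlt)

lemma concaveOn_logDivOneSubExpNeg : ConcaveOn ℝ (Ici 0) logDivOneSubExpNeg := by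
  have hcont : ContinuousOn logDivOneSubExpNeg (Ici 0) := by
    intro u hu
    rcases (mem_Ici.1 hu).eq_or_lt with rfl | hu
    · rw [← continuousWithinAt_Ioi_iff_Ici, ContinuousWithinAt, logDivOneSubExpNeg_zero]
      exact tendsto_logDivOneSubExpNeg_nhdsGT
    · exact (hasDerivAt_logDivOneSubExpNeg hu).continuousAt.continuousWithinAt
  refine concaveOn_of_hasDerivWithinAt2_nonpos (convex_Ici 0) hcont
    (f'' := fun u => -(u ^ 2)⁻¹ + exp u / (exp u - 1) ^ 2)
    (fun u hu => (hasDerivAt_logDivOneSubExpNeg (by simpa using hu)).hasDerivWithinAt)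
    (fun u hu => ?_) fun u hu => ?_ <;> rw [interior_Ici, mem_Ioi] at hu
  · have hne : exp u - 1 ≠ 0 := sub_ne_zero.2 (one_lt_exp_iff.2 hu).ne'
    refine (((hasDerivAt_inv hu.ne').sub
      (((hasDerivAt_exp u).sub_const 1).inv hne)).congr_deriv ?_).hasDerivWithinAt
    ring
  · have hpos : 0 < exp u - 1 := sub_pos.2 (one_lt_exp_iff.2 hu)
    rw [neg_add_nonpos_iff, div_le_iff₀ (by positivity), inv_mul_eq_div,
      le_div_iff₀ (by positivity)]
    nlinarith [sq_mul_exp_le_exp_sub_one_sq hu.le]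

lemma antitoneOn_logDivOneSubExpNeg_div :
    AntitoneOn (fun u => logDivOneSubExpNeg u / u) (Ioi 0) := by
  intro u hu v hv huv
  have h := (neg_convexOn_iff.2 concaveOn_logDivOneSubExpNeg).secant_mono self_mem_Ici
    (mem_Ici.2 (le_of_lt hu)) (mem_Ici.2 (le_of_lt hv)) (ne_of_gt hu) (ne_of_gt hv) huv
  simp only [Pi.neg_apply, logDivOneSubExpNeg_zero, neg_zero, sub_zero, neg_div] at h
  exact neg_le_neg_iff.1 h

noncomputable def gammaSurvival (m : ℕ) (τ : ℝ) : ℝ :=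
  exp (-(m * τ)) * ∑ j ∈ Finset.range m, (m * τ) ^ j / j !

noncomputable def gammaDensity (m : ℕ) (τ : ℝ) : ℝ :=
  m * exp (-(m * τ)) * (m * τ) ^ (m - 1) / (m - 1)!

lemma hasDerivAt_exp_neg_mul_sum_range (n : ℕ) (x : ℝ) :
    HasDerivAt (fun y => exp (-y) * ∑ j ∈ Finset.range (n + 1), y ^ j / j !)
      (-(exp (-x) * x ^ n / n !)) x := by
  induction n with
  | zero => simpa using (hasDerivAt_neg x).exp
  | succ n ih =>
    simp_rw [Finset.sum_range_succ _ (n + 1), mul_add]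
    refine (ih.add ((hasDerivAt_neg x).exp.mul
      ((hasDerivAt_pow (n + 1) x).div_const (n + 1)!))).congr_deriv ?_
    rw [Nat.factorial_succ]
    push_cast
    field_simp
    ring

lemma hasDerivAt_gammaSurvival {m : ℕ} (hm : 1 ≤ m) (τ : ℝ) :
    HasDerivAt (gammaSurvival m) (-gammaDensity m τ) τ := by
  obtain ⟨n, rfl⟩ := Nat.exists_eq_add_of_le' hm
  refine ((hasDerivAt_exp_neg_mul_sum_range n _).comp τ
    ((hasDerivAt_id τ).const_mul _)).congr_deriv ?_
  simp only [Nat.cast_add, Nat.cast_one, id_eq, mul_one, neg_mul, gammaDensity,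
    add_tsub_cancel_right, neg_inj]
  ring

lemma gammaSurvival_zero {m : ℕ} (hm : 1 ≤ m) : gammaSurvival m 0 = 1 := by
  obtain ⟨n, rfl⟩ := Nat.exists_eq_add_of_le' hm
  simp [gammaSurvival, Finset.sum_range_succ']

lemma gammaSurvival_nonneg (m : ℕ) {τ : ℝ} (hτ : 0 ≤ τ) : 0 ≤ gammaSurvival m τ := by
  unfold gammaSurvival
  positivity

lemma gammaSurvival_le_one (m : ℕ) {τ : ℝ} (hτ : 0 ≤ τ) : gammaSurvival m τ ≤ 1 := by
  calc gammaSurvival m τ ≤ exp (-(m * τ)) * exp (m * τ) :=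
        mul_le_mul_of_nonneg_left (sum_le_exp_of_nonneg (by positivity) m) (exp_pos _).le
    _ = 1 := by rw [← exp_add, neg_add_cancel, exp_zero]

lemma tendsto_gammaSurvival_atTop {m : ℕ} (hm : 1 ≤ m) :
    Tendsto (gammaSurvival m) atTop (𝓝 0) := by
  have hscale : Tendsto (fun τ : ℝ => m * τ) atTop atTop :=
    tendsto_id.const_mul_atTop (by exact_mod_cast hm)
  have hterm (j : ℕ) : Tendsto (fun x : ℝ => x ^ j * exp (-x) / j !) atTop (𝓝 0) := by
    simpa using (tendsto_pow_mul_exp_neg_atTop_nhds_zero j).div_const (j ! : ℝ)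
  have hsum := (tendsto_finsetSum (Finset.range m) fun j _ => hterm j).comp hscale
  rw [Finset.sum_const_zero] at hsum
  refine hsum.congr fun τ => ?_
  simp only [Function.comp_apply, gammaSurvival, Finset.mul_sum]
  exact Finset.sum_congr rfl fun j _ => by ring

lemma continuous_gammaSurvival (m : ℕ) : Continuous (gammaSurvival m) := by
  unfold gammaSurvival
  fun_prop

lemma gammaDensity_pos {m : ℕ} (hm : 1 ≤ m) {τ : ℝ} (hτ : 0 < τ) : 0 < gammaDensity m τ := by
  have : (0 : ℝ) < m := by exact_mod_cast hm
  unfold gammaDensity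
  positivity

lemma nakagamiGammaPdf_eq_gammaDensity {m : ℕ} (hm : 1 ≤ m) {x : ℝ} (hx : 0 < x) :
    nakagamiGammaPdf m x = gammaDensity m x := by
  obtain ⟨n, rfl⟩ := Nat.exists_eq_add_of_le' hm
  simp only [nakagamiGammaPdf, gammaDensity, if_pos hx, Nat.add_sub_cancel, mul_pow]
  push_cast
  ring_nf

lemma withDensity_nakagamiGammaPdf_Ici {m : ℕ} (hm : 1 ≤ m) {τ : ℝ} (hτ : 0 ≤ τ) :
    volume.withDensity (fun x => ENNReal.ofReal (nakagamiGammaPdf m x)) (Ici τ) =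
      ENNReal.ofReal (gammaSurvival m τ) := by
  have hderiv : ∀ x ∈ Ici τ, HasDerivAt (-gammaSurvival m) (gammaDensity m x) x :=
    fun x _ => (hasDerivAt_gammaSurvival hm x).neg.congr_deriv (neg_neg _)
  have hpos : ∀ x ∈ Ioi τ, 0 ≤ gammaDensity m x :=
    fun x hx => (gammaDensity_pos hm (hτ.trans_lt hx)).le
  have hlim : Tendsto (-gammaSurvival m) atTop (𝓝 0) :=
    neg_zero (G := ℝ) ▸ (tendsto_gammaSurvival_atTop hm).neg
  rw [withDensity_apply _ measurableSet_Ici, setLIntegral_congr Ioi_ae_eq_Ici.symm,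
    setLIntegral_congr_fun measurableSet_Ioi fun x hx => by
      rw [nakagamiGammaPdf_eq_gammaDensity hm (hτ.trans_lt hx)],
    ← ofReal_integral_eq_lintegral_ofReal (integrableOn_Ioi_deriv_of_nonneg' hderiv hpos hlim)
      ((ae_restrict_iff' measurableSet_Ioi).2 (.of_forall hpos)),
    integral_Ioi_of_hasDerivAt_of_nonneg' hderiv hpos hlim, Pi.neg_apply, zero_sub, neg_neg]

/-- `1 - (1 - e^{-cτ})^m`, the survival function of the maximum of `m` independent exponential
variables of rate `c`. -/
noncomputable def alzerBound (m : ℕ) (c τ : ℝ) : ℝ := 1 - (1 - exp (-(c * τ))) ^ m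

noncomputable def alzerDensity (m : ℕ) (c τ : ℝ) : ℝ :=
  m * c * exp (-(c * τ)) * (1 - exp (-(c * τ))) ^ (m - 1)

lemma alzerBound_mul (m : ℕ) (c a τ : ℝ) : alzerBound m (c * a) τ = alzerBound m c (a * τ) := by
  rw [alzerBound, alzerBound, mul_assoc]

lemma hasDerivAt_alzerBound (m : ℕ) (c τ : ℝ) :
    HasDerivAt (alzerBound m c) (-alzerDensity m c τ) τ := by
  have hexp : HasDerivAt (fun t => 1 - exp (-(c * t))) (c * exp (-(c * τ))) τ := by
    simpa [mul_comm] using (((hasDerivAt_id τ).const_mul c).neg.exp).const_sub 1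
  refine ((hexp.pow m).const_sub 1).congr_deriv ?_
  simp only [alzerDensity]
  ring

lemma alzerBound_zero {m : ℕ} (hm : 1 ≤ m) (c : ℝ) : alzerBound m c 0 = 1 := by
  simp [alzerBound, Nat.one_le_iff_ne_zero.1 hm]

lemma tendsto_alzerBound_atTop (m : ℕ) {c : ℝ} (hc : 0 < c) :
    Tendsto (alzerBound m c) atTop (𝓝 0) := by
  have hexp : Tendsto (fun τ => exp (-(c * τ))) atTop (𝓝 0) :=
    tendsto_exp_atBot.comp (tendsto_neg_atTop_atBot.comp (tendsto_id.const_mul_atTop hc))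
  have h := ((hexp.const_sub 1).pow m).const_sub 1
  rwa [sub_zero, one_pow, sub_self] at h

lemma log_alzerDensity_sub_log_gammaDensity {m : ℕ} (hm : 1 ≤ m) {c τ : ℝ} (hc : 0 < c)
    (hτ : 0 < τ) :
    log (alzerDensity m c τ) - log (gammaDensity m τ) =
      m * log (c / m) + log m ! + (m - c) * τ - (m - 1) * logDivOneSubExpNeg (c * τ) := by
  obtain ⟨n, rfl⟩ := Nat.exists_eq_add_of_le' hm
  have hM : (0 : ℝ) < n + 1 := by positivity
  have hE := one_sub_exp_neg_pos (mul_pos hc hτ)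
  have hfac : ((n + 1)! : ℝ) = (n + 1) * n ! := by push_cast [Nat.factorial_succ]; ring
  simp only [alzerDensity, gammaDensity, logDivOneSubExpNeg, Nat.add_sub_cancel, hfac]
  push_cast
  rw [log_mul (by positivity) (by positivity), log_mul (by positivity) (by positivity),
    log_mul (by positivity) (by positivity), log_pow, log_exp, log_div (by positivity)
    (by positivity), log_mul (by positivity) (by positivity), log_mul (by positivity)
    (by positivity), log_pow, log_exp, log_div hc.ne' hM.ne', log_mul hM.ne' (by positivity),
    log_mul hc.ne' hτ.ne', log_mul hM.ne' (by positivity)]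
  ring

lemma alzerDensity_pos {m : ℕ} (hm : 1 ≤ m) {c τ : ℝ} (hc : 0 < c) (hτ : 0 < τ) :
    0 < alzerDensity m c τ := by
  have : (0 : ℝ) < m := by exact_mod_cast hm
  have := one_sub_exp_neg_pos (mul_pos hc hτ)
  unfold alzerDensity
  positivity

theorem alzerBound_le_gammaSurvival {m : ℕ} (hm : 1 ≤ m) {τ : ℝ} (hτ : 0 ≤ τ) :
    alzerBound m m τ ≤ gammaSurvival m τ := by
  have hM : (0 : ℝ) < m := by exact_mod_cast hm
  have hM1 : (0 : ℝ) ≤ m - 1 := sub_nonneg.2 (by exact_mod_cast hm)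
  refine sub_nonneg.1 (nonneg_of_hasDerivAt_of_sign_antitone
    (f := fun t => gammaSurvival m t - alzerBound m m t)
    (g := fun t => log m ! - (m - 1) * logDivOneSubExpNeg (m * t))
    (fun t => ((hasDerivAt_gammaSurvival hm t).sub (hasDerivAt_alzerBound m m t)).congr_deriv
      (sub_neg_eq_add _ _))
    (by simp [gammaSurvival_zero hm, alzerBound_zero hm]) ?_ ?_ (fun t ht => ?_) hτ)
  · simpa using (tendsto_gammaSurvival_atTop hm).sub (tendsto_alzerBound_atTop m hM)
  · intro s hs t ht hst
    exact sub_le_sub_left (mul_le_mul_of_nonneg_left (monotoneOn_logDivOneSubExpNeg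
      (mul_pos hM hs) (mul_pos hM ht) (mul_le_mul_of_nonneg_left hst hM.le)) hM1) _
  · rw [neg_add_eq_sub, sub_neg, ← log_lt_log_iff (alzerDensity_pos hm hM ht)
      (gammaDensity_pos hm ht), ← sub_neg, log_alzerDensity_sub_log_gammaDensity hm hM ht,
      div_self hM.ne', log_one, mul_zero, zero_add, sub_self, zero_mul, add_zero]

lemma mul_factorial_rpow_pos {m : ℕ} (hm : 1 ≤ m) : 0 < (m : ℝ) * (m ! : ℝ) ^ (-(1 : ℝ) / m) :=
  mul_pos (by exact_mod_cast hm) (rpow_pos_of_pos (by exact_mod_cast m.factorial_pos) _)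

theorem gammaSurvival_le_alzerBound {m : ℕ} (hm : 1 ≤ m) {b : ℝ}
    (hb : b = m * (m ! : ℝ) ^ (-(1 : ℝ) / m)) {τ : ℝ} (hτ : 0 ≤ τ) :
    gammaSurvival m τ ≤ alzerBound m b τ := by
  have hM : (0 : ℝ) < m := by exact_mod_cast hm
  have hM1 : (0 : ℝ) ≤ m - 1 := sub_nonneg.2 (by exact_mod_cast hm)
  have hfac : (0 : ℝ) < m ! := by exact_mod_cast m.factorial_pos
  have hb0 : 0 < b := hb ▸ mul_factorial_rpow_pos hm
  -- `b` is chosen so that `b ^ m = m ^ m / m!`, which kills the constant of the log-ratio.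
  have hb_log : (m : ℝ) * log (b / m) + log m ! = 0 := by
    rw [hb, mul_div_cancel_left₀ _ hM.ne', log_rpow hfac]
    field_simp
    ring
  refine sub_nonneg.1 (nonneg_of_hasDerivAt_of_sign_antitone
    (f := fun t => alzerBound m b t - gammaSurvival m t)
    (g := fun t => (m - 1) * (logDivOneSubExpNeg (b * t) / t) - (m - b))
    (fun t => ((hasDerivAt_alzerBound m b t).sub (hasDerivAt_gammaSurvival hm t)).congr_deriv
      (sub_neg_eq_add _ _))
    (by simp [gammaSurvival_zero hm, alzerBound_zero hm]) ?_ ?_ (fun t ht => ?_) hτ)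
  · simpa using (tendsto_alzerBound_atTop m hb0).sub (tendsto_gammaSurvival_atTop hm)
  · intro s hs t ht hst
    have hq := antitoneOn_logDivOneSubExpNeg_div (mul_pos hb0 hs) (mul_pos hb0 ht)
      (mul_le_mul_of_nonneg_left hst hb0.le)
    have hslope : logDivOneSubExpNeg (b * t) / t ≤ logDivOneSubExpNeg (b * s) / s := by
      rw [div_le_div_iff₀ (mul_pos hb0 ht) (mul_pos hb0 hs)] at hq
      rw [div_le_div_iff₀ ht hs]
      nlinarith
    exact sub_le_sub_right (mul_le_mul_of_nonneg_left hslope hM1) _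
  · rw [neg_add_eq_sub, sub_neg, ← log_lt_log_iff (gammaDensity_pos hm ht)
      (alzerDensity_pos hm hb0 ht), ← sub_pos, log_alzerDensity_sub_log_gammaDensity hm hb0 ht,
      hb_log, zero_add, sub_pos, sub_neg, mul_div_assoc', div_lt_iff₀ ht]

lemma one_sub_one_sub_pow_eq_sum (m : ℕ) (u : ℝ) :
    1 - (1 - u) ^ m = ∑ k ∈ Finset.Icc 1 m, (-1) ^ (k + 1) * (m.choose k : ℝ) * u ^ k := by
  rw [sub_eq_neg_add 1 u, add_pow, Finset.range_eq_Ico,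
    Finset.sum_eq_sum_Ico_succ_bot (Nat.zero_lt_succ m), zero_add, Nat.succ_eq_add_one,
    Finset.Ico_add_one_right_eq_Icc, ← sub_sub]
  simp only [pow_zero, one_pow, mul_one, Nat.choose_zero_right, Nat.cast_one, sub_self,
    zero_sub, ← Finset.sum_neg_distrib]
  refine Finset.sum_congr rfl fun k _ => ?_
  rw [neg_pow, pow_succ]
  ring

lemma alzerBound_add_eq_sum (m : ℕ) (c y σ : ℝ) :
    alzerBound m c (y + σ) = ∑ k ∈ Finset.Icc 1 m,
      (-1) ^ (k + 1) * (m.choose k : ℝ) * exp (-k * c * σ) * exp (-(k * c) * y) := by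
  rw [alzerBound, one_sub_one_sub_pow_eq_sum]
  refine Finset.sum_congr rfl fun k _ => ?_
  rw [← exp_nat_mul, mul_assoc, mul_assoc, ← exp_add]
  ring_nf

section Expectation

variable {Ω : Type*} [MeasurableSpace Ω] {P : Measure Ω} [IsFiniteMeasure P]

theorem ProbabilityTheory.IndepFun.measure_le_eq_lintegral_map_Ici {X Y : Ω → ℝ}
    (hX : Measurable X) (hY : Measurable Y) (hXY : IndepFun X Y P) :
    P {ω | Y ω ≤ X ω} = ∫⁻ ω, P.map X (Ici (Y ω)) ∂P := by
  have hs : MeasurableSet {p : ℝ × ℝ | p.2 ≤ p.1} :=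
    measurableSet_le measurable_snd measurable_fst
  rw [show {ω | Y ω ≤ X ω} = (fun ω => (X ω, Y ω)) ⁻¹' {p : ℝ × ℝ | p.2 ≤ p.1} from rfl,
    ← Measure.map_apply (hX.prodMk hY) hs,
    (indepFun_iff_map_prod_eq_prod_map_map hX.aemeasurable hY.aemeasurable).1 hXY,
    Measure.prod_apply_symm hs, lintegral_map (measurable_measure_prodMk_right hs) hY]
  rfl

lemma toReal_measure_le_eq_integral_gammaSurvival {m : ℕ} (hm : 1 ≤ m) {H T : Ω → ℝ}
    (hH : Measurable H) (hT : Measurable T)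
    (hHlaw : P.map H = volume.withDensity (fun x => ENNReal.ofReal (nakagamiGammaPdf m x)))
    (hT0 : ∀ ω, 0 ≤ T ω) (hHT : IndepFun H T P) :
    (P {ω | T ω ≤ H ω}).toReal = ∫ ω, gammaSurvival m (T ω) ∂P := by
  rw [hHT.measure_le_eq_lintegral_map_Ici hH hT, hHlaw, integral_eq_lintegral_of_nonneg_ae
    (.of_forall fun ω => gammaSurvival_nonneg m (hT0 ω))
    ((continuous_gammaSurvival m).measurable.comp hT).aestronglyMeasurable,
    lintegral_congr fun ω => withDensity_nakagamiGammaPdf_Ici hm (hT0 ω)]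

lemma integrable_gammaSurvival_comp (m : ℕ) {T : Ω → ℝ} (hT : Measurable T)
    (hT0 : ∀ ω, 0 ≤ T ω) : Integrable (fun ω => gammaSurvival m (T ω)) P :=
  Integrable.of_bound ((continuous_gammaSurvival m).measurable.comp hT).aestronglyMeasurable 1
    (.of_forall fun ω => by
      rw [norm_of_nonneg (gammaSurvival_nonneg m (hT0 ω))]
      exact gammaSurvival_le_one m (hT0 ω))

lemma integrable_exp_neg_mul {Y : Ω → ℝ} (hY : Measurable Y) (hY0 : ∀ ω, 0 ≤ Y ω) {s : ℝ}
    (hs : 0 ≤ s) : Integrable (fun ω => exp (-s * Y ω)) P :=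
  Integrable.of_bound (by fun_prop) 1 (.of_forall fun ω => by
    rw [norm_of_nonneg (exp_pos _).le, exp_le_one_iff, neg_mul, neg_nonpos]
    exact mul_nonneg hs (hY0 ω))

lemma integrable_alzerBound_add {Y : Ω → ℝ} (hY : Measurable Y) (hY0 : ∀ ω, 0 ≤ Y ω) (m : ℕ)
    {c : ℝ} (hc : 0 ≤ c) (σ : ℝ) :
    Integrable (fun ω => alzerBound m c (Y ω + σ)) P := by
  simp_rw [alzerBound_add_eq_sum]
  exact integrable_finsetSum _ fun k _ =>
    (integrable_exp_neg_mul hY hY0 (by positivity)).const_mul _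

lemma integral_alzerBound_add {Y : Ω → ℝ} (hY : Measurable Y) (hY0 : ∀ ω, 0 ≤ Y ω) (m : ℕ)
    {c : ℝ} (hc : 0 ≤ c) (σ : ℝ) :
    ∫ ω, alzerBound m c (Y ω + σ) ∂P = ∑ k ∈ Finset.Icc 1 m,
      (-1) ^ (k + 1) * (m.choose k : ℝ) * exp (-k * c * σ) * ∫ ω, exp (-(k * c) * Y ω) ∂P := by
  simp_rw [alzerBound_add_eq_sum]
  rw [integral_finsetSum _ fun k _ =>
    (integrable_exp_neg_mul hY hY0 (by positivity)).const_mul _]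
  simp_rw [integral_const_mul]

end Expectation

/-- Two-sided Alzer bounds on the coverage probability: if `H` is Gamma with shape `m`
and rate `m`, `I ≥ 0` is independent of `H` with Laplace transform `L`, and
`b = m (m!)^{-1/m}`, then for `a > 0` and `σ ≥ 0`,
`∑_{k=1}^{m} (-1)^{k+1} C(m,k) e^{-k m a σ} L(k m a) ≤ P(H ≥ a(I+σ))
  ≤ ∑_{k=1}^{m} (-1)^{k+1} C(m,k) e^{-k b a σ} L(k b a)`. -/
theorem coverage_probability_alzer_bounds
    {Ω : Type*} [MeasurableSpace Ω] (P : Measure Ω) [IsProbabilityMeasure P]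
    (m : ℕ) (hm : 1 ≤ m)
    (H I : Ω → ℝ) (hH : Measurable H) (hI : Measurable I)
    (hHlaw : P.map H = volume.withDensity (fun x => ENNReal.ofReal (nakagamiGammaPdf m x)))
    (hI0 : ∀ ω, 0 ≤ I ω) (hindep : IndepFun H I P)
    (L : ℝ → ℝ) (hL : ∀ s : ℝ, L s = ∫ ω, Real.exp (-s * I ω) ∂P)
    (b : ℝ) (hb : b = (m : ℝ) * (Nat.factorial m : ℝ) ^ (-(1 : ℝ) / (m : ℝ)))
    (a σ : ℝ) (ha : 0 < a) (hσ : 0 ≤ σ) :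
    (∑ k ∈ Finset.Icc 1 m,
        (-1 : ℝ) ^ (k + 1) * (m.choose k : ℝ) * Real.exp (-(k : ℝ) * ((m : ℝ) * a) * σ)
          * L ((k : ℝ) * ((m : ℝ) * a)))
      ≤ (P {ω | a * (I ω + σ) ≤ H ω}).toReal ∧
    (P {ω | a * (I ω + σ) ≤ H ω}).toReal
      ≤ ∑ k ∈ Finset.Icc 1 m,
          (-1 : ℝ) ^ (k + 1) * (m.choose k : ℝ) * Real.exp (-(k : ℝ) * (b * a) * σ)
            * L ((k : ℝ) * (b * a)) := by
  have hma : 0 ≤ (m : ℝ) * a := by positivity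
  have hba : 0 ≤ b * a := (mul_pos (hb ▸ mul_factorial_rpow_pos hm) ha).le
  have hT0 (ω : Ω) : 0 ≤ a * (I ω + σ) := mul_nonneg ha.le (add_nonneg (hI0 ω) hσ)
  have hsurv := integrable_gammaSurvival_comp (P := P) m (by fun_prop) hT0
  have hlow := integral_alzerBound_add hI hI0 (P := P) m hma σ
  have hup := integral_alzerBound_add hI hI0 (P := P) m hba σ
  simp only [← hL] at hlow hup
  rw [← hlow, ← hup, toReal_measure_le_eq_integral_gammaSurvival hm hH (by fun_prop) hHlaw hT0
    (hindep.comp measurable_id (by fun_prop : Measurable fun y => a * (y + σ)))]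
  refine ⟨integral_mono (integrable_alzerBound_add hI hI0 m hma σ) hsurv fun ω => ?_,
    integral_mono hsurv (integrable_alzerBound_add hI hI0 m hba σ) fun ω => ?_⟩
  · simpa only [alzerBound_mul] using alzerBound_le_gammaSurvival hm (hT0 ω)
  · simpa only [alzerBound_mul] using gammaSurvival_le_alzerBound hm hb (hT0 ω)
end

section
/- Let (Ω, P) be a probability space, m ≥ 1 an integer, H a random variable with Gamma density m^m x^{m-1} e^{-mx}/(m-1)! on x > 0, and I a nonnegative random variable independent of H with Laplace transform L(s) = E[e^{-s I}]. Let a_m, a_n, ε_f, ε_t, c, σ be positive reals with a_m - a_n ε_f > 0 and a_n - β a_m ε_t > 0, where β ≥ 0, and set ε* = max{ ε_f/(a_m - a_n ε_f), ε_t/(a_n - β a_m ε_t) }. Then P( a_m c H/(a_n c H + I + σ) > ε_f and a_n c H/(I + σ + β a_m c H) > ε_t ) = ∑_{k=0}^{m-1} ∑_{p=0}^{k} C(k,p) · ((m ε*/c)^k / k!) · σ^p · e^{-(m ε* σ)/c} · (-1)^{k-p} · L^{(k-p)}(m ε*/c), where L^{(j)} denotes the j-th iterated derivative of L. -/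
open MeasureTheory Set Real ProbabilityTheory

/-!
For `H > 0` both decoding conditions become linear in `H` after clearing denominators, and
together they say exactly `H > ε* (I + σ) / c`. Conditionally on `I`, the tail of a Gamma law of
integer shape `m` is the Erlang tail `e^{-x} ∑_{k<m} x^k / k!`, here at `x = s (I + σ)` with
`s = m ε* / c`. Expanding `(I + σ)^k` binomially leaves the quantities `E[I^j e^{-s I}]`, which
are `(-1)^j L^{(j)}(s)` because `L(s)` is the moment generating function of `I` at `-s`.
-/

open Filter Topology
open scoped Nat

/-- `erlangTail n x = ∫ t in Ioi x, t ^ (n - 1) * exp (-t) / (n - 1)!` for `n ≥ 1`: the tail of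
the Erlang law of shape `n` and unit rate. -/
noncomputable def erlangTail (n : ℕ) (x : ℝ) : ℝ :=
  (∑ k ∈ Finset.range n, x ^ k / k !) * exp (-x)

theorem erlangTail_nonneg (n : ℕ) {x : ℝ} (hx : 0 ≤ x) : 0 ≤ erlangTail n x := by
  unfold erlangTail; positivity

@[fun_prop]
theorem continuous_erlangTail (n : ℕ) : Continuous (erlangTail n) := by
  unfold erlangTail; fun_prop

theorem hasDerivAt_erlangTail_succ (n : ℕ) (x : ℝ) :
    HasDerivAt (erlangTail (n + 1)) (-(x ^ n / n ! * exp (-x))) x := by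
  induction n with
  | zero =>
    have h1 : erlangTail 1 = fun y => exp (-y) := by ext; simp [erlangTail]
    simpa [h1] using (hasDerivAt_neg x).exp
  | succ n ih =>
    have hsplit : erlangTail (n + 2) =
        fun y => erlangTail (n + 1) y + y ^ (n + 1) / (n + 1)! * exp (-y) := by
      ext y; simp only [erlangTail, Finset.sum_range_succ _ (n + 1), add_mul]
    have hterm : HasDerivAt (fun y => y ^ (n + 1) / (n + 1)! * exp (-y))
        (x ^ n / n ! * exp (-x) - x ^ (n + 1) / (n + 1)! * exp (-x)) x := by
      refine (((hasDerivAt_pow (n + 1) x).div_const _).mul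
        (hasDerivAt_neg x).exp).congr_deriv ?_
      rw [Nat.factorial_succ]; push_cast; field_simp; ring
    rw [hsplit]
    refine (ih.add hterm).congr_deriv ?_
    ring

theorem tendsto_erlangTail_atTop (n : ℕ) : Tendsto (erlangTail n) atTop (𝓝 0) := by
  have h : ∀ k ∈ Finset.range n,
      Tendsto (fun x : ℝ => x ^ k * exp (-x) / k !) atTop (𝓝 0) := fun k _ => by
    simpa using (tendsto_pow_mul_exp_neg_atTop_nhds_zero k).div_const (k ! : ℝ)
  have hsum : erlangTail n = fun x => ∑ k ∈ Finset.range n, x ^ k * exp (-x) / k ! := by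
    ext x; simp only [erlangTail, Finset.sum_mul, div_mul_eq_mul_div]
  simpa [hsum] using tendsto_finsetSum _ h

theorem erlangTail_mul_add (n : ℕ) (s y σ : ℝ) :
    erlangTail n (s * (y + σ)) = ∑ k ∈ Finset.range n, ∑ p ∈ Finset.range (k + 1),
      (k.choose p : ℝ) * (s ^ k / k !) * σ ^ p * exp (-(s * σ)) *
        (y ^ (k - p) * exp (-s * y)) := by
  have hexp : exp (-(s * (σ + y))) = exp (-(s * σ)) * exp (-s * y) := by
    rw [← exp_add]; ring_nf
  rw [erlangTail, Finset.sum_mul]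
  refine Finset.sum_congr rfl fun k _ => ?_
  rw [mul_pow, add_comm y σ, add_pow, hexp, Finset.mul_sum, Finset.sum_div, Finset.sum_mul]
  refine Finset.sum_congr rfl fun p _ => ?_
  ring

theorem lintegral_Ioi_nakagamiGammaPdf {m : ℕ} (hm : 1 ≤ m) {t : ℝ} (ht : 0 ≤ t) :
    ∫⁻ x in Ioi t, ENNReal.ofReal (nakagamiGammaPdf m x) =
      ENNReal.ofReal (erlangTail m (m * t)) := by
  obtain ⟨n, rfl⟩ : ∃ n, m = n + 1 := ⟨m - 1, by omega⟩
  set r : ℝ := ((n + 1 : ℕ) : ℝ)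
  set f : ℝ → ℝ := fun x => r * ((r * x) ^ n / n ! * exp (-(r * x)))
  have hderiv : ∀ x ∈ Ici t, HasDerivAt (fun y => -erlangTail (n + 1) (r * y)) (f x) x := by
    intro x _
    have h := (hasDerivAt_erlangTail_succ n (r * x)).comp x ((hasDerivAt_id x).const_mul r)
    refine h.neg.congr_deriv ?_
    simp only [f]
    ring
  have hf_nonneg : ∀ x ∈ Ioi t, 0 ≤ f x := fun x hx => by
    have : 0 ≤ x := ht.trans hx.le
    positivity
  have hlim : Tendsto (fun y => -erlangTail (n + 1) (r * y)) atTop (𝓝 0) := by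
    simpa using ((tendsto_erlangTail_atTop (n + 1)).comp
      (tendsto_id.const_mul_atTop (by positivity : 0 < r))).neg
  have hpdf : ∀ x ∈ Ioi t,
      ENNReal.ofReal (nakagamiGammaPdf (n + 1) x) = ENNReal.ofReal (f x) := by
    intro x hx
    rw [nakagamiGammaPdf, if_pos (ht.trans_lt hx), Nat.add_sub_cancel]
    simp only [f, r, neg_mul]
    congr 1
    ring
  rw [setLIntegral_congr_fun measurableSet_Ioi hpdf,
    ← ofReal_integral_eq_lintegral_ofReal
      (integrableOn_Ioi_deriv_of_nonneg' hderiv hf_nonneg hlim)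
      (ae_restrict_of_forall_mem measurableSet_Ioi hf_nonneg),
    integral_Ioi_of_hasDerivAt_of_nonneg' hderiv hf_nonneg hlim, zero_sub, neg_neg]

theorem ae_pos_of_map_eq_nakagamiGamma {Ω : Type*} [MeasurableSpace Ω] {P : Measure Ω}
    {m : ℕ} {H : Ω → ℝ} (hH : Measurable H)
    (hHlaw : P.map H = volume.withDensity (fun x => ENNReal.ofReal (nakagamiGammaPdf m x))) :
    ∀ᵐ ω ∂P, 0 < H ω := by
  have hpdf : Measurable (nakagamiGammaPdf m) :=
    Measurable.ite measurableSet_Ioi (by fun_prop) measurable_const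
  refine ae_of_ae_map hH.aemeasurable ?_
  rw [hHlaw, ae_withDensity_iff hpdf.ennreal_ofReal]
  refine ae_of_all _ fun x hx => ?_
  by_contra hneg
  exact hx (by simp [nakagamiGammaPdf, hneg])

theorem measure_comp_lt_eq_lintegral_of_indepFun {Ω β : Type*} [MeasurableSpace Ω]
    [MeasurableSpace β] {P : Measure Ω} [IsFiniteMeasure P] {X : Ω → ℝ} {Y : Ω → β}
    (hX : Measurable X) (hY : Measurable Y) (hXY : IndepFun X Y P) {g : β → ℝ}
    (hg : Measurable g) :
    P {ω | g (Y ω) < X ω} = ∫⁻ ω, P.map X (Ioi (g (Y ω))) ∂P := by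
  have hS : MeasurableSet {q : ℝ × β | g q.2 < q.1} :=
    measurableSet_lt (hg.comp measurable_snd) measurable_fst
  have hmap : P.map (fun ω => (X ω, Y ω)) = (P.map X).prod (P.map Y) :=
    (indepFun_iff_map_prod_eq_prod_map_map hX.aemeasurable hY.aemeasurable).mp hXY
  calc P {ω | g (Y ω) < X ω}
      = P.map (fun ω => (X ω, Y ω)) {q | g q.2 < q.1} :=
        (Measure.map_apply (hX.prodMk hY) hS).symm
    _ = ∫⁻ y, P.map X ((fun x => (x, y)) ⁻¹' {q | g q.2 < q.1}) ∂P.map Y := by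
      rw [hmap, Measure.prod_apply_symm hS]
    _ = ∫⁻ ω, P.map X (Ioi (g (Y ω))) ∂P :=
      lintegral_map (measurable_measure_prodMk_right hS) hY

section Laplace

variable {Ω : Type*} [MeasurableSpace Ω] {μ : Measure Ω} [IsFiniteMeasure μ] {X : Ω → ℝ}

theorem Iio_subset_interior_integrableExpSet (hX : AEMeasurable X μ) (hX0 : 0 ≤ᵐ[μ] X) :
    Iio 0 ⊆ interior (integrableExpSet X μ) := by
  rw [← interior_Iic]
  refine interior_mono fun t ht => (integrable_const (1 : ℝ)).mono'
    (hX.const_mul t).exp.aestronglyMeasurable (hX0.mono fun ω hω => ?_)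
  rw [norm_of_nonneg (exp_nonneg _), exp_le_one_iff]
  exact mul_nonpos_of_nonpos_of_nonneg ht hω

theorem integral_pow_mul_exp_neg_mul_eq_iteratedDeriv (hX : AEMeasurable X μ)
    (hX0 : 0 ≤ᵐ[μ] X) {s : ℝ} (hs : 0 < s) (n : ℕ) :
    ∫ ω, X ω ^ n * exp (-s * X ω) ∂μ =
      (-1) ^ n * iteratedDeriv n (fun t => ∫ ω, exp (-t * X ω) ∂μ) s := by
  have hmem : -s ∈ interior (integrableExpSet X μ) :=
    Iio_subset_interior_integrableExpSet hX hX0 (neg_neg_iff_pos.mpr hs)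
  rw [show (fun t => ∫ ω, exp (-t * X ω) ∂μ) = fun t => mgf X μ (-t) from rfl,
    iteratedDeriv_comp_neg, iteratedDeriv_mgf hmem, smul_eq_mul, ← mul_assoc, ← mul_pow]
  simp

theorem integral_erlangTail_mul_add (hX : AEMeasurable X μ) (hX0 : 0 ≤ᵐ[μ] X) {s : ℝ}
    (hs : 0 < s) (σ : ℝ) (n : ℕ) :
    ∫ ω, erlangTail n (s * (X ω + σ)) ∂μ =
      ∑ k ∈ Finset.range n, ∑ p ∈ Finset.range (k + 1),
        (k.choose p : ℝ) * (s ^ k / k !) * σ ^ p * exp (-(s * σ)) * (-1) ^ (k - p)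
          * iteratedDeriv (k - p) (fun t => ∫ ω, exp (-t * X ω) ∂μ) s := by
  have hint (j : ℕ) : Integrable (fun ω => X ω ^ j * exp (-s * X ω)) μ :=
    integrable_pow_mul_exp_of_mem_interior_integrableExpSet
      (Iio_subset_interior_integrableExpSet hX hX0 (neg_neg_iff_pos.mpr hs)) j
  simp_rw [erlangTail_mul_add]
  rw [integral_finsetSum _ fun k _ => integrable_finsetSum _ fun p _ => (hint _).const_mul _]
  refine Finset.sum_congr rfl fun k _ => ?_
  rw [integral_finsetSum _ fun p _ => (hint _).const_mul _]
  refine Finset.sum_congr rfl fun p _ => ?_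
  rw [integral_const_mul, integral_pow_mul_exp_neg_mul_eq_iteratedDeriv hX hX0 hs]
  ring

end Laplace

theorem lt_mul_div_add_iff {ε a b y z : ℝ} (hz : 0 < z) (hden : 0 < b * y + z)
    (hab : 0 < a - b * ε) : ε < a * y / (b * y + z) ↔ ε / (a - b * ε) < y / z := by
  rw [lt_div_iff₀ hden, div_lt_div_iff₀ hab hz]
  constructor <;> intro h <;> linarith

theorem near_user_decoding_iff {am an εf εt β c σ h x : ℝ} (ham : 0 < am) (han : 0 < an)
    (hβ : 0 ≤ β) (hc : 0 < c) (hσ : 0 < σ) (hf : 0 < am - an * εf)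
    (ht : 0 < an - β * am * εt) (hh : 0 < h) (hx : 0 ≤ x) :
    (εf < am * c * h / (an * c * h + x + σ) ∧ εt < an * c * h / (x + σ + β * am * c * h)) ↔
      max (εf / (am - an * εf)) (εt / (an - β * am * εt)) * (x + σ) / c < h := by
  have hz : 0 < x + σ := by positivity
  have hch : 0 < c * h := by positivity
  have hfar : εf < am * c * h / (an * c * h + x + σ) ↔
      εf / (am - an * εf) < c * h / (x + σ) := by
    rw [show am * c * h / (an * c * h + x + σ) = am * (c * h) / (an * (c * h) + (x + σ)) by
      ring]
    exact lt_mul_div_add_iff hz (by positivity) hf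
  have hnear : εt < an * c * h / (x + σ + β * am * c * h) ↔
      εt / (an - β * am * εt) < c * h / (x + σ) := by
    rw [show an * c * h / (x + σ + β * am * c * h) =
      an * (c * h) / (β * am * (c * h) + (x + σ)) by ring]
    exact lt_mul_div_add_iff hz (by positivity) ht
  rw [hfar, hnear, ← max_lt_iff, div_lt_iff₀ hc, lt_div_iff₀ hz, mul_comm c h]

theorem noma_near_user_coverage_exact_general
    {Ω : Type*} [MeasurableSpace Ω] (P : Measure Ω) [IsProbabilityMeasure P]
    (m : ℕ) (hm : 1 ≤ m)
    (H I : Ω → ℝ) (hH : Measurable H) (hI : Measurable I)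
    (hHlaw : P.map H = volume.withDensity (fun x => ENNReal.ofReal (nakagamiGammaPdf m x)))
    (hI0 : ∀ ω, 0 ≤ I ω) (hindep : IndepFun H I P)
    (L : ℝ → ℝ) (hL : ∀ s : ℝ, L s = ∫ ω, Real.exp (-s * I ω) ∂P)
    (am an εf εt c σ : ℝ) (ham : 0 < am) (han : 0 < an) (hεf : 0 < εf)
    (hc : 0 < c) (hσ : 0 < σ) (β : ℝ) (hβ : 0 ≤ β)
    (hf : 0 < am - an * εf) (ht : 0 < an - β * am * εt)
    (εs : ℝ) (hεs : εs = max (εf / (am - an * εf)) (εt / (an - β * am * εt))) :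
    (P {ω | εf < am * c * H ω / (an * c * H ω + I ω + σ) ∧
            εt < an * c * H ω / (I ω + σ + β * am * c * H ω)}).toReal
      = ∑ k ∈ Finset.range m, ∑ p ∈ Finset.range (k + 1),
          (k.choose p : ℝ) * (((m : ℝ) * εs / c) ^ k / (Nat.factorial k : ℝ)) * σ ^ p
            * Real.exp (-((m : ℝ) * εs * σ) / c) * (-1 : ℝ) ^ (k - p)
            * iteratedDeriv (k - p) L ((m : ℝ) * εs / c) := by
  have hεs0 : 0 < εs := hεs ▸ lt_max_of_lt_left (div_pos hεf hf)
  set s : ℝ := (m : ℝ) * εs / c with hs_def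
  have hs : 0 < s := by positivity
  have hevent : {ω | εf < am * c * H ω / (an * c * H ω + I ω + σ) ∧
      εt < an * c * H ω / (I ω + σ + β * am * c * H ω)} =ᵐ[P]
      {ω | εs * (I ω + σ) / c < H ω} :=
    (ae_pos_of_map_eq_nakagamiGamma hH hHlaw).mono fun ω hω =>
      propext (hεs ▸ near_user_decoding_iff ham han hβ hc hσ hf ht hω (hI0 ω))
  have htail : P {ω | εs * (I ω + σ) / c < H ω} =
      ∫⁻ ω, ENNReal.ofReal (erlangTail m (s * (I ω + σ))) ∂P := by
    rw [measure_comp_lt_eq_lintegral_of_indepFun hH hI hindep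
      (g := fun y => εs * (y + σ) / c) (by fun_prop)]
    refine lintegral_congr fun ω => ?_
    have : 0 ≤ εs * (I ω + σ) / c := by have := hI0 ω; positivity
    rw [hHlaw, withDensity_apply _ measurableSet_Ioi, lintegral_Ioi_nakagamiGammaPdf hm this,
      hs_def]
    congr 2
    ring
  obtain rfl : L = fun t => ∫ ω, exp (-t * I ω) ∂P := funext hL
  have hexp : -((m : ℝ) * εs * σ) / c = -(s * σ) := by rw [hs_def]; ring
  rw [measure_congr hevent, htail, ← integral_eq_lintegral_of_nonneg_ae
    (ae_of_all _ fun ω => erlangTail_nonneg m (by have := hI0 ω; positivity)) (by fun_prop),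
    integral_erlangTail_mul_add hI.aemeasurable (ae_of_all _ hI0) hs, hexp]

/-- Proposition 2 (exact coverage probability for the near NOMA user): with `H` Gamma of
shape `m` and rate `m`, `I ≥ 0` independent of `H` with Laplace transform `L`,
power allocation `a_m, a_n` with `a_m - a_n ε_f > 0` and `a_n - β a_m ε_t > 0`,
`ε* = max{ε_f/(a_m - a_n ε_f), ε_t/(a_n - β a_m ε_t)}`, path gain `c > 0` and noise
`σ > 0`, the joint decoding probability equals the double-sum Laplace-derivative formula
evaluated at `m ε*/c`. -/
theorem noma_near_user_coverage_exact
    {Ω : Type*} [MeasurableSpace Ω] (P : Measure Ω) [IsProbabilityMeasure P]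
    (m : ℕ) (hm : 1 ≤ m)
    (H I : Ω → ℝ) (hH : Measurable H) (hI : Measurable I)
    (hHlaw : P.map H = volume.withDensity (fun x => ENNReal.ofReal (nakagamiGammaPdf m x)))
    (hI0 : ∀ ω, 0 ≤ I ω) (hindep : IndepFun H I P)
    (L : ℝ → ℝ) (hL : ∀ s : ℝ, L s = ∫ ω, Real.exp (-s * I ω) ∂P)
    (am an εf εt c σ : ℝ) (ham : 0 < am) (han : 0 < an) (hεf : 0 < εf) (hεt : 0 < εt)
    (hc : 0 < c) (hσ : 0 < σ) (β : ℝ) (hβ : 0 ≤ β)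
    (hf : 0 < am - an * εf) (ht : 0 < an - β * am * εt)
    (εs : ℝ) (hεs : εs = max (εf / (am - an * εf)) (εt / (an - β * am * εt))) :
    (P {ω | εf < am * c * H ω / (an * c * H ω + I ω + σ) ∧
            εt < an * c * H ω / (I ω + σ + β * am * c * H ω)}).toReal
      = ∑ k ∈ Finset.range m, ∑ p ∈ Finset.range (k + 1),
          (k.choose p : ℝ) * (((m : ℝ) * εs / c) ^ k / (Nat.factorial k : ℝ)) * σ ^ p
            * Real.exp (-((m : ℝ) * εs * σ) / c) * (-1 : ℝ) ^ (k - p)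
            * iteratedDeriv (k - p) L ((m : ℝ) * εs / c) :=
  noma_near_user_coverage_exact_general P m hm H I hH hI hHlaw hI0 hindep L hL am an εf εt c σ ham
    han hεf hc hσ β hβ hf ht εs hεs
end

section
/- Let (Ω, P) be a probability space, m ≥ 1 an integer, H a random variable with Gamma density m^m x^{m-1} e^{-mx}/(m-1)! on x > 0, and I a nonnegative random variable independent of H with Laplace transform L(s) = E[e^{-s I}]. Let a_m, a_n, ε_t, c, σ be positive reals with a_m - a_n ε_t > 0, and set ε_t^f = ε_t/(a_m - a_n ε_t). Then P( a_m c H/(a_n c H + I + σ) > ε_t ) = ∑_{k=0}^{m-1} ∑_{p=0}^{k} C(k,p) · ((m ε_t^f/c)^k / k!) · σ^p · e^{-(m ε_t^f σ)/c} · (-1)^{k-p} · L^{(k-p)}(m ε_t^f/c), where L^{(j)} denotes the j-th iterated derivative of L. -/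
open MeasureTheory Set Real ProbabilityTheory

/-!
For integer shape `m`, the Gamma tail is the Poisson-type sum
`P(H > t) = e^{-mt} ∑_{k<m} (mt)^k / k!`, because the density is the derivative of minus the
right-hand side in `t`. On `H > 0` the coverage event is `H > ε_t^f (I + σ) / c`, so
by independence its probability is `E[e^{-s(I+σ)} ∑_{k<m} (s(I+σ))^k / k!]` with
`s = m ε_t^f / c`. Expanding `(I + σ)^k` binomially leaves the moments `E[(-I)^j e^{-sI}]`,
which are the derivatives `L^{(j)}(s)`: `L` is the moment generating function of `-I`, finite
on `s > 0` because `I ≥ 0`.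
-/

open Filter Topology

noncomputable def erlangSurvival (n : ℕ) (u : ℝ) : ℝ :=
  exp (-u) * ∑ k ∈ Finset.range n, u ^ k / k.factorial

@[fun_prop]
lemma continuous_erlangSurvival (n : ℕ) : Continuous (erlangSurvival n) := by
  unfold erlangSurvival; fun_prop

lemma hasDerivAt_erlangSurvival_succ (n : ℕ) (u : ℝ) :
    HasDerivAt (erlangSurvival (n + 1)) (-(exp (-u) * u ^ n / n.factorial)) u := by
  induction n with
  | zero =>
    have h : erlangSurvival 1 = fun u => exp (-u) := by funext u; simp [erlangSurvival]
    simpa [h] using (hasDerivAt_neg' u).exp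
  | succ n ih =>
    have hterm : HasDerivAt (fun u => exp (-u) * (u ^ (n + 1) / (n + 1).factorial))
        (exp (-u) * -1 * (u ^ (n + 1) / (n + 1).factorial)
          + exp (-u) * ((n + 1 : ℕ) * u ^ (n + 1 - 1) / (n + 1).factorial)) u :=
      (hasDerivAt_neg' u).exp.mul ((hasDerivAt_pow (n + 1) u).div_const _)
    have hsplit : erlangSurvival (n + 2) =
        fun u => erlangSurvival (n + 1) u + exp (-u) * (u ^ (n + 1) / (n + 1).factorial) := by
      funext u; simp only [erlangSurvival, Finset.sum_range_succ _ (n + 1)]; ring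
    rw [hsplit]
    refine (ih.add hterm).congr_deriv ?_
    simp only [Nat.add_sub_cancel, Nat.factorial_succ]; push_cast
    field_simp
    ring

lemma tendsto_erlangSurvival_atTop (n : ℕ) : Tendsto (erlangSurvival n) atTop (𝓝 0) := by
  have h : Tendsto (fun u => ∑ k ∈ Finset.range n, u ^ k * exp (-u) / k.factorial)
      atTop (𝓝 0) := by
    simpa using tendsto_finsetSum (Finset.range n) fun k _ =>
      (tendsto_pow_mul_exp_neg_atTop_nhds_zero k).div_const (k.factorial : ℝ)
  refine h.congr fun u => ?_
  simp only [erlangSurvival, Finset.mul_sum]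
  exact Finset.sum_congr rfl fun k _ => by ring

lemma erlangSurvival_mul_add (n : ℕ) (s σ y : ℝ) :
    erlangSurvival n (s * (y + σ)) = ∑ k ∈ Finset.range n, ∑ p ∈ Finset.range (k + 1),
      k.choose p * (s ^ k / k.factorial) * σ ^ p * exp (-(s * σ)) * (-1) ^ (k - p)
        * ((-y) ^ (k - p) * exp (-s * y)) := by
  have hexp : exp (-(s * (y + σ))) = exp (-(s * σ)) * exp (-s * y) := by
    rw [← exp_add]; ring_nf
  have hsign (j : ℕ) : (-1 : ℝ) ^ j * ((-y) ^ j * exp (-s * y)) = y ^ j * exp (-s * y) := by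
    rw [← mul_assoc, ← mul_pow]; simp
  rw [erlangSurvival, hexp, Finset.mul_sum]
  refine Finset.sum_congr rfl fun k _ => ?_
  simp only [mul_assoc _ ((-1 : ℝ) ^ _), hsign]
  rw [mul_pow, add_comm y σ, add_pow, Finset.mul_sum, Finset.sum_div, Finset.mul_sum]
  refine Finset.sum_congr rfl fun p _ => ?_
  ring

lemma nakagamiGammaPdf_nonneg (m : ℕ) (x : ℝ) : 0 ≤ nakagamiGammaPdf m x := by
  unfold nakagamiGammaPdf; split_ifs <;> positivity

lemma measurable_nakagamiGammaPdf (m : ℕ) : Measurable (nakagamiGammaPdf m) :=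
  Measurable.ite measurableSet_Ioi (by fun_prop) measurable_const

lemma hasDerivAt_neg_erlangSurvival_mul {m : ℕ} (hm : 1 ≤ m) {x : ℝ} (hx : 0 < x) :
    HasDerivAt (fun x => -erlangSurvival m (m * x)) (nakagamiGammaPdf m x) x := by
  obtain ⟨n, rfl⟩ := Nat.exists_eq_add_of_le' hm
  have h := ((hasDerivAt_erlangSurvival_succ n _).comp x
    ((hasDerivAt_id x).const_mul ((n + 1 : ℕ) : ℝ))).neg
  refine h.congr_deriv ?_
  simp only [nakagamiGammaPdf, if_pos hx, Nat.add_sub_cancel, id, mul_pow, neg_mul]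
  ring

section NakagamiTail

variable {m : ℕ} (hm : 1 ≤ m) {t : ℝ} (ht : 0 ≤ t)
include hm ht

lemma integrableOn_Ioi_nakagamiGammaPdf : IntegrableOn (nakagamiGammaPdf m) (Ioi t) :=
  integrableOn_Ioi_deriv_of_nonneg
    ((continuous_erlangSurvival m).comp (continuous_const_mul _)).neg.continuousWithinAt
    (fun _ hx => hasDerivAt_neg_erlangSurvival_mul hm (ht.trans_lt hx))
    (fun x _ => nakagamiGammaPdf_nonneg m x)
    ((tendsto_erlangSurvival_atTop m).comp (tendsto_id.const_mul_atTop (by positivity))).neg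

lemma integral_Ioi_nakagamiGammaPdf :
    ∫ x in Ioi t, nakagamiGammaPdf m x = erlangSurvival m (m * t) := by
  rw [integral_Ioi_of_hasDerivAt_of_nonneg
    ((continuous_erlangSurvival m).comp (continuous_const_mul _)).neg.continuousWithinAt
    (fun _ hx => hasDerivAt_neg_erlangSurvival_mul hm (ht.trans_lt hx))
    (fun x _ => nakagamiGammaPdf_nonneg m x)
    (((tendsto_erlangSurvival_atTop m).comp (tendsto_id.const_mul_atTop (by positivity))).neg)]
  simp

end NakagamiTail

noncomputable def nakagamiGammaMeasure (m : ℕ) : Measure ℝ :=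
  volume.withDensity fun x => ENNReal.ofReal (nakagamiGammaPdf m x)

lemma ae_pos_nakagamiGammaMeasure (m : ℕ) : ∀ᵐ x ∂nakagamiGammaMeasure m, 0 < x := by
  rw [ae_iff, nakagamiGammaMeasure,
    withDensity_apply_eq_zero' (measurable_nakagamiGammaPdf m).ennreal_ofReal.aemeasurable]
  convert measure_empty (μ := volume)
  ext x
  by_cases hx : 0 < x <;> simp [nakagamiGammaPdf, hx]

lemma toReal_nakagamiGammaMeasure_Ioi {m : ℕ} (hm : 1 ≤ m) {t : ℝ} (ht : 0 ≤ t) :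
    (nakagamiGammaMeasure m (Ioi t)).toReal = erlangSurvival m (m * t) := by
  rw [nakagamiGammaMeasure, withDensity_apply _ measurableSet_Ioi,
    ← ofReal_integral_eq_lintegral_ofReal (integrableOn_Ioi_nakagamiGammaPdf hm ht)
      (ae_of_all _ (nakagamiGammaPdf_nonneg m)),
    ENNReal.toReal_ofReal (integral_nonneg (nakagamiGammaPdf_nonneg m)),
    integral_Ioi_nakagamiGammaPdf hm ht]

section LaplaceTransform

variable {Ω : Type*} [MeasurableSpace Ω] {P : Measure Ω} [IsFiniteMeasure P] {I : Ω → ℝ}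
  (hI : AEMeasurable I P) (hI0 : ∀ᵐ ω ∂P, 0 ≤ I ω)
include hI hI0

lemma Ioi_subset_interior_integrableExpSet_neg : Ioi 0 ⊆ interior (integrableExpSet (-I) P) := by
  refine interior_maximal (fun t (ht : 0 < t) => ?_) isOpen_Ioi
  refine Integrable.of_bound (hI.neg.const_mul t).exp.aestronglyMeasurable 1 ?_
  filter_upwards [hI0] with ω hω
  simp only [Pi.neg_apply, norm_eq_abs, abs_exp, exp_le_one_iff]
  nlinarith

lemma integrable_pow_mul_exp_neg_mul {s : ℝ} (hs : 0 < s) (j : ℕ) :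
    Integrable (fun ω => (-I ω) ^ j * exp (-s * I ω)) P := by
  simpa using integrable_pow_mul_exp_of_mem_interior_integrableExpSet
    (Ioi_subset_interior_integrableExpSet_neg hI hI0 hs) j

lemma iteratedDeriv_integral_exp_neg_mul {s : ℝ} (hs : 0 < s) (j : ℕ) :
    iteratedDeriv j (fun s => ∫ ω, exp (-s * I ω) ∂P) s
      = ∫ ω, (-I ω) ^ j * exp (-s * I ω) ∂P := by
  have h : (fun s => ∫ ω, exp (-s * I ω) ∂P) = mgf (-I) P := by
    funext s; simp [mgf]
  rw [h]
  simpa using iteratedDeriv_mgf (Ioi_subset_interior_integrableExpSet_neg hI hI0 hs) j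

lemma integral_erlangSurvival_mul_add {s : ℝ} (hs : 0 < s) (n : ℕ) (σ : ℝ) :
    ∫ ω, erlangSurvival n (s * (I ω + σ)) ∂P
      = ∑ k ∈ Finset.range n, ∑ p ∈ Finset.range (k + 1),
          k.choose p * (s ^ k / k.factorial) * σ ^ p * exp (-(s * σ)) * (-1) ^ (k - p)
            * iteratedDeriv (k - p) (fun s => ∫ ω, exp (-s * I ω) ∂P) s := by
  have hint (j : ℕ) := integrable_pow_mul_exp_neg_mul hI hI0 hs j
  simp only [erlangSurvival_mul_add, iteratedDeriv_integral_exp_neg_mul hI hI0 hs]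
  rw [integral_finsetSum _ fun k _ => integrable_finsetSum _ fun p _ => (hint _).const_mul _]
  refine Finset.sum_congr rfl fun k _ => ?_
  rw [integral_finsetSum _ fun p _ => (hint _).const_mul _]
  exact Finset.sum_congr rfl fun p _ => integral_const_mul _ _

end LaplaceTransform

lemma toReal_measure_lt_eq_integral_of_indepFun {Ω : Type*} [MeasurableSpace Ω] {P : Measure Ω}
    [IsFiniteMeasure P] {X Y : Ω → ℝ} (hX : Measurable X) (hY : Measurable Y)
    (hXY : IndepFun X Y P) {g : ℝ → ℝ} (hg : Measurable g) :
    (P {ω | g (Y ω) < X ω}).toReal = ∫ y, (P.map X (Ioi (g y))).toReal ∂(P.map Y) := by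
  have hS : MeasurableSet {q : ℝ × ℝ | g q.2 < q.1} :=
    measurableSet_lt (hg.comp measurable_snd) measurable_fst
  have hprod : P {ω | g (Y ω) < X ω} = ∫⁻ y, P.map X (Ioi (g y)) ∂(P.map Y) := by
    rw [show {ω | g (Y ω) < X ω} = (fun ω => (X ω, Y ω)) ⁻¹' {q | g q.2 < q.1} from rfl,
      ← Measure.map_apply (hX.prodMk hY) hS,
      (indepFun_iff_map_prod_eq_prod_map_map hX.aemeasurable hY.aemeasurable).1 hXY,
      Measure.prod_apply_symm hS]
    rfl
  rw [hprod, integral_toReal]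
  · have hanti : Antitone fun a => P.map X (Ioi a) :=
      fun _ _ hab => measure_mono (Ioi_subset_Ioi hab)
    exact (hanti.measurable.comp hg).aemeasurable
  · exact ae_of_all _ fun y => measure_lt_top _ _

theorem noma_far_user_coverage_exact_general
    {Ω : Type*} [MeasurableSpace Ω] (P : Measure Ω) [IsProbabilityMeasure P]
    (m : ℕ) (hm : 1 ≤ m)
    (H I : Ω → ℝ) (hH : Measurable H) (hI : Measurable I)
    (hHlaw : P.map H = volume.withDensity (fun x => ENNReal.ofReal (nakagamiGammaPdf m x)))
    (hI0 : ∀ ω, 0 ≤ I ω) (hindep : IndepFun H I P)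
    (L : ℝ → ℝ) (hL : ∀ s : ℝ, L s = ∫ ω, Real.exp (-s * I ω) ∂P)
    (am an εt c σ : ℝ) (han : 0 < an) (hεt : 0 < εt)
    (hc : 0 < c) (hσ : 0 < σ) (ht : 0 < am - an * εt)
    (εtf : ℝ) (hεtf : εtf = εt / (am - an * εt)) :
    (P {ω | εt < am * c * H ω / (an * c * H ω + I ω + σ)}).toReal
      = ∑ k ∈ Finset.range m, ∑ p ∈ Finset.range (k + 1),
          (k.choose p : ℝ) * (((m : ℝ) * εtf / c) ^ k / (Nat.factorial k : ℝ)) * σ ^ p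
            * Real.exp (-((m : ℝ) * εtf * σ) / c) * (-1 : ℝ) ^ (k - p)
            * iteratedDeriv (k - p) L ((m : ℝ) * εtf / c) := by
  have hεtf0 : 0 < εtf := hεtf ▸ div_pos hεt ht
  have hs : 0 < (m : ℝ) * εtf / c := div_pos (mul_pos (by exact_mod_cast hm) hεtf0) hc
  have hH0 : ∀ᵐ ω ∂P, 0 < H ω :=
    ae_of_ae_map hH.aemeasurable (hHlaw ▸ ae_pos_nakagamiGammaMeasure m)
  have hevent : P {ω | εt < am * c * H ω / (an * c * H ω + I ω + σ)}
      = P {ω | εtf * (I ω + σ) / c < H ω} := by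
    refine measure_congr (eventuallyEq_set.2 (hH0.mono fun ω hω => ?_))
    rw [mem_ofPred_eq, mem_ofPred_eq, lt_div_iff₀ (by have := hI0 ω; positivity),
      div_lt_iff₀ hc, hεtf, div_mul_eq_mul_div, div_lt_iff₀ ht]
    constructor <;> intro h <;> linarith
  have htail (y : ℝ) (hy : 0 ≤ y) : (P.map H (Ioi (εtf * (y + σ) / c))).toReal
      = erlangSurvival m ((m : ℝ) * εtf / c * (y + σ)) := by
    rw [hHlaw, ← nakagamiGammaMeasure, toReal_nakagamiGammaMeasure_Ioi hm (by positivity)]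
    ring_nf
  calc (P {ω | εt < am * c * H ω / (an * c * H ω + I ω + σ)}).toReal
      = ∫ y, (P.map H (Ioi (εtf * (y + σ) / c))).toReal ∂P.map I := by
        rw [hevent]
        exact toReal_measure_lt_eq_integral_of_indepFun hH hI hindep
          (g := fun y => εtf * (y + σ) / c) (by fun_prop)
    _ = ∫ y, erlangSurvival m ((m : ℝ) * εtf / c * (y + σ)) ∂P.map I :=
        integral_congr_ae <|
          ((ae_map_iff hI.aemeasurable measurableSet_Ici).2 (ae_of_all _ hI0)).mono htail
    _ = ∫ ω, erlangSurvival m ((m : ℝ) * εtf / c * (I ω + σ)) ∂P :=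
        integral_map hI.aemeasurable (by fun_prop)
    _ = _ := by
        rw [integral_erlangSurvival_mul_add hI.aemeasurable (ae_of_all _ hI0) hs, ← funext hL]
        refine Finset.sum_congr rfl fun k _ => Finset.sum_congr rfl fun p _ => ?_
        ring_nf

/-- Proposition 3 (exact coverage probability for the far NOMA user): with `H` Gamma of
shape `m` and rate `m`, `I ≥ 0` independent of `H` with Laplace transform `L`, power
allocation `a_m, a_n` with `a_m - a_n ε_t > 0`, `ε_t^f = ε_t/(a_m - a_n ε_t)`, path gain
`c > 0` and noise `σ > 0`, the decoding probability equals the double-sum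
Laplace-derivative formula evaluated at `m ε_t^f/c`. -/
theorem noma_far_user_coverage_exact
    {Ω : Type*} [MeasurableSpace Ω] (P : Measure Ω) [IsProbabilityMeasure P]
    (m : ℕ) (hm : 1 ≤ m)
    (H I : Ω → ℝ) (hH : Measurable H) (hI : Measurable I)
    (hHlaw : P.map H = volume.withDensity (fun x => ENNReal.ofReal (nakagamiGammaPdf m x)))
    (hI0 : ∀ ω, 0 ≤ I ω) (hindep : IndepFun H I P)
    (L : ℝ → ℝ) (hL : ∀ s : ℝ, L s = ∫ ω, Real.exp (-s * I ω) ∂P)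
    (am an εt c σ : ℝ) (ham : 0 < am) (han : 0 < an) (hεt : 0 < εt)
    (hc : 0 < c) (hσ : 0 < σ) (ht : 0 < am - an * εt)
    (εtf : ℝ) (hεtf : εtf = εt / (am - an * εt)) :
    (P {ω | εt < am * c * H ω / (an * c * H ω + I ω + σ)}).toReal
      = ∑ k ∈ Finset.range m, ∑ p ∈ Finset.range (k + 1),
          (k.choose p : ℝ) * (((m : ℝ) * εtf / c) ^ k / (Nat.factorial k : ℝ)) * σ ^ p
            * Real.exp (-((m : ℝ) * εtf * σ) / c) * (-1 : ℝ) ^ (k - p)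
            * iteratedDeriv (k - p) L ((m : ℝ) * εtf / c) :=
  noma_far_user_coverage_exact_general P m hm H I hH hI hHlaw hI0 hindep L hL am an εt c σ han hεt
    hc hσ ht εtf hεtf
end
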